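/- arXiv:1503.05407 — 2 statements merged into one kernel-verified Lean document; each statement's English description precedes it below -/
import Mathlib

section
/- Let α ∈ (0,1], let m be a real number, and let (c_k) be a real sequence such that y(x) = ∑_{k=0}^{∞} c_k x^{kα} converges on an interval (0, R) with R > 0 and satisfies the conformable fractional Hermite equation T_α T_α y − 2α x^{α} T_α y + 2α² m y = 0 on (0, R). Then c₂ = −m c₀ and c_{k+2} = 2(k − m) c_k / ((k+1)(k+2)) for every k ≥ 1. -/
/-!
Substituting `t = x ^ α` turns `y` into the ordinary power series `g t = ∑ c k * t ^ k` and the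
conformable derivative into `T_α (g ∘ (· ^ α)) x = α * g' (x ^ α)`, so the fractional equation
becomes the classical Hermite equation `g'' - 2 t g' + 2 m g = 0` on `(0, R ^ α)`. As `g` is
analytic at `0`, the identity theorem extends this equation to a neighbourhood of `0`, and its
`n`-th derivative at `0` reads `(n + 1) (n + 2) c (n + 2) = 2 (n - m) c n`.
-/

open Filter Topology Set FormalMultilinearSeries

section PowerSeries

variable {𝕜 : Type*} [NontriviallyNormedField 𝕜] [CompleteSpace 𝕜] [CharZero 𝕜]

theorem HasFPowerSeriesAt.iteratedDeriv_eq_factorial_mul {f : 𝕜 → 𝕜} {c : ℕ → 𝕜} {x : 𝕜}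
    (hf : HasFPowerSeriesAt f (ofScalars 𝕜 c) x) (n : ℕ) :
    iteratedDeriv n f x = n.factorial * c n := by
  rw [congrFun (ofScalars_series_injective 𝕜 𝕜
    (hf.eq_formalMultilinearSeries hf.analyticAt.hasFPowerSeriesAt)) n,
    mul_div_cancel₀ _ (by exact_mod_cast n.factorial_ne_zero)]

theorem AnalyticAt.iteratedDeriv_id_mul_deriv_zero {g : 𝕜 → 𝕜} (hg : AnalyticAt 𝕜 g 0) (n : ℕ) :
    iteratedDeriv n (fun t => t * deriv g t) 0 = n * iteratedDeriv n g 0 := by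
  rw [iteratedDeriv_fun_mul (f := fun t => t) contDiffAt_id hg.deriv.contDiffAt,
    Finset.sum_eq_single 1 (fun i _ hi => by simp [iteratedDeriv_fun_id_zero, hi])
      (fun h => by simp_all)]
  cases n with
  | zero => simp
  | succ n => simp [iteratedDeriv_fun_id_zero, ← iteratedDeriv_succ']

theorem AnalyticAt.iteratedDeriv_hermite_zero {g : 𝕜 → 𝕜} (hg : AnalyticAt 𝕜 g 0) (m : 𝕜)
    (n : ℕ) :
    iteratedDeriv n (fun t => deriv (deriv g) t - 2 * (t * deriv g t) + 2 * m * g t) 0 =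
      iteratedDeriv (n + 2) g 0 - 2 * n * iteratedDeriv n g 0 + 2 * m * iteratedDeriv n g 0 := by
  have hg' := hg.deriv.contDiffAt (n := n)
  have hg'' := hg.deriv.deriv.contDiffAt (n := n)
  have hg₀ := hg.contDiffAt (n := n)
  rw [iteratedDeriv_fun_add (by fun_prop) (by fun_prop),
    iteratedDeriv_fun_sub (by fun_prop) (by fun_prop),
    iteratedDeriv_const_mul _ (by fun_prop), iteratedDeriv_const_mul _ hg₀,
    hg.iteratedDeriv_id_mul_deriv_zero, iteratedDeriv_succ', iteratedDeriv_succ']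
  ring

theorem HasFPowerSeriesAt.hermite_coeff_recurrence {g : 𝕜 → 𝕜} {c : ℕ → 𝕜} {m : 𝕜}
    (hg : HasFPowerSeriesAt g (ofScalars 𝕜 c) 0)
    (hode : ∃ᶠ t in 𝓝[≠] 0, deriv (deriv g) t - 2 * (t * deriv g t) + 2 * m * g t = 0)
    (n : ℕ) : (n + 1) * (n + 2) * c (n + 2) = 2 * (n - m) * c n := by
  have ha := hg.analyticAt
  have ha' := ha.deriv
  have ha'' := ha'.deriv
  have hzero : (fun t => deriv (deriv g) t - 2 * (t * deriv g t) + 2 * m * g t) =ᶠ[𝓝 0] 0 :=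
    (AnalyticAt.frequently_zero_iff_eventually_zero (by fun_prop)).mp hode
  have h := (hzero.iteratedDeriv n).self_of_nhds
  rw [ha.iteratedDeriv_hermite_zero, iteratedDeriv_const_zero, hg.iteratedDeriv_eq_factorial_mul,
    hg.iteratedDeriv_eq_factorial_mul, Nat.factorial_succ, Nat.factorial_succ] at h
  have hfac : (n.factorial : 𝕜) ≠ 0 := by exact_mod_cast n.factorial_ne_zero
  apply mul_left_cancel₀ hfac
  push_cast at h
  linear_combination h

end PowerSeries

theorem FormalMultilinearSeries.ofReal_le_radius_ofScalars {c : ℕ → ℝ} {ρ : ℝ}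
    (hc : ∀ r, 0 < r → r < ρ → Summable fun n => c n * r ^ n) :
    ENNReal.ofReal ρ ≤ (ofScalars ℝ c).radius := by
  refine ENNReal.le_of_forall_nnreal_lt fun r hr => ?_
  rcases eq_or_ne r 0 with rfl | hr0
  · simp
  have hrρ : (r : ℝ) < ρ := by simpa using (ENNReal.lt_ofReal_iff_toReal_lt (by simp)).mp hr
  refine (ofScalars ℝ c).le_radius_of_tendsto (l := 0) ?_
  simpa [ofScalars_norm, abs_mul] using (hc r (by positivity) hrρ).tendsto_atTop_zero.abs

theorem exists_rpow_eq_of_mem_Ioo {α R t : ℝ} (hα : 0 < α) (hR : 0 ≤ R) (ht : t ∈ Ioo 0 (R ^ α)) :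
    ∃ x ∈ Ioo 0 R, x ^ α = t := by
  refine ⟨t ^ α⁻¹, ⟨by have := ht.1; positivity, ?_⟩, Real.rpow_inv_rpow ht.1.le hα.ne'⟩
  simpa [Real.rpow_rpow_inv hR hα.ne'] using Real.rpow_lt_rpow ht.1.le ht.2 (inv_pos.mpr hα)

theorem ofReal_rpow_le_radius_ofScalars {c : ℕ → ℝ} {α R : ℝ} (hα : 0 < α) (hR : 0 ≤ R)
    (hc : ∀ x, 0 < x → x < R → Summable fun k : ℕ => c k * x ^ ((k : ℝ) * α)) :
    ENNReal.ofReal (R ^ α) ≤ (ofScalars ℝ c).radius := by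
  refine ofReal_le_radius_ofScalars fun r hr hrR => ?_
  obtain ⟨x, hx, rfl⟩ := exists_rpow_eq_of_mem_Ioo hα hR ⟨hr, hrR⟩
  simpa [mul_comm _ α, Real.rpow_mul_natCast hx.1.le] using hc x hx.1 hx.2

noncomputable def conformableDeriv (α : ℝ) (f : ℝ → ℝ) (x : ℝ) : ℝ := x ^ (1 - α) * deriv f x

theorem conformableDeriv_eqOn_comp_rpow {α : ℝ} {f g : ℝ → ℝ} {U : Set ℝ} (hU : IsOpen U)
    (hpos : U ⊆ Ioi 0) (hfg : EqOn f (fun s => g (s ^ α)) U)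
    (hg : ∀ x ∈ U, DifferentiableAt ℝ g (x ^ α)) :
    EqOn (conformableDeriv α f) (fun x => α * deriv g (x ^ α)) U := by
  intro x hx
  have hx0 : 0 < x := hpos hx
  have hd : HasDerivAt (fun s => g (s ^ α)) (deriv g (x ^ α) * (α * x ^ (α - 1))) x :=
    (hg x hx).hasDerivAt.comp x (Real.hasDerivAt_rpow_const (Or.inl hx0.ne'))
  have hcancel : x ^ (1 - α) * x ^ (α - 1) = 1 := by rw [← Real.rpow_add hx0]; norm_num
  rw [conformableDeriv, (hfg.eventuallyEq_of_mem (hU.mem_nhds hx)).deriv_eq, hd.deriv]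
  linear_combination (α * deriv g (x ^ α)) * hcancel

theorem conformableDeriv_conformableDeriv_eqOn_comp_rpow {α : ℝ} {f g : ℝ → ℝ} {U : Set ℝ}
    (hU : IsOpen U) (hpos : U ⊆ Ioi 0) (hfg : EqOn f (fun s => g (s ^ α)) U)
    (hg : ∀ x ∈ U, DifferentiableAt ℝ g (x ^ α))
    (hg' : ∀ x ∈ U, DifferentiableAt ℝ (deriv g) (x ^ α)) :
    EqOn (conformableDeriv α (conformableDeriv α f)) (fun x => α ^ 2 * deriv (deriv g) (x ^ α))
      U := by
  intro x hx
  rw [conformableDeriv_eqOn_comp_rpow hU hpos (conformableDeriv_eqOn_comp_rpow hU hpos hfg hg)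
    (fun x hx => (hg' x hx).const_mul α) hx]
  simp only [deriv_const_mul _ (hg' x hx)]
  ring

theorem hermite_ode_of_conformable_hermite {α m R : ℝ} (hα : α ≠ 0) {y g : ℝ → ℝ}
    (hyg : EqOn y (fun s => g (s ^ α)) (Ioo 0 R)) (hg : ∀ x ∈ Ioo 0 R, AnalyticAt ℝ g (x ^ α))
    (heq : ∀ x ∈ Ioo 0 R, conformableDeriv α (conformableDeriv α y) x
      - 2 * α * x ^ α * conformableDeriv α y x + 2 * α ^ 2 * m * y x = 0)
    {x : ℝ} (hx : x ∈ Ioo 0 R) :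
    deriv (deriv g) (x ^ α) - 2 * (x ^ α * deriv g (x ^ α)) + 2 * m * g (x ^ α) = 0 := by
  have hpos : Ioo 0 R ⊆ Ioi 0 := fun x hx => hx.1
  have hg₁ := fun x hx => (hg x hx).differentiableAt
  have h := heq x hx
  rw [conformableDeriv_conformableDeriv_eqOn_comp_rpow isOpen_Ioo hpos hyg hg₁
      (fun x hx => (hg x hx).deriv.differentiableAt) hx,
    conformableDeriv_eqOn_comp_rpow isOpen_Ioo hpos hyg hg₁ hx, hyg hx] at h
  have h' : α ^ 2 * (deriv (deriv g) (x ^ α) - 2 * (x ^ α * deriv g (x ^ α))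
      + 2 * m * g (x ^ α)) = 0 := by linear_combination h
  exact (mul_eq_zero.mp h').resolve_left (pow_ne_zero 2 hα)

theorem stmt_6 (α : ℝ) (hα : α ∈ Set.Ioc (0:ℝ) 1) (m : ℝ) (c : ℕ → ℝ) (R : ℝ) (hR : 0 < R)
    (hconv : ∀ x : ℝ, 0 < x → x < R → Summable (fun k : ℕ => c k * x ^ ((k : ℝ) * α)))
    (y : ℝ → ℝ) (hy : y = fun x => ∑' k : ℕ, c k * x ^ ((k : ℝ) * α))
    (T : (ℝ → ℝ) → (ℝ → ℝ)) (hT : T = fun f x => x ^ (1 - α) * deriv f x)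
    (heq : ∀ x : ℝ, 0 < x → x < R →
      T (T y) x - 2 * α * x ^ α * T y x + 2 * α ^ 2 * m * y x = 0) :
    c 2 = -m * c 0 ∧
      ∀ k : ℕ, 1 ≤ k →
        c (k + 2) = 2 * ((k : ℝ) - m) * c k / (((k : ℝ) + 1) * ((k : ℝ) + 2)) := by
  obtain ⟨hα0, -⟩ := hα
  have hT' : T = conformableDeriv α := hT
  subst hT'
  set g := ofScalarsSum (E := ℝ) c
  have hρ : (0 : ℝ) < R ^ α := by positivity
  have hrad := ofReal_rpow_le_radius_ofScalars hα0 hR.le hconv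
  have hball : HasFPowerSeriesOnBall g (ofScalars ℝ c) 0 (ofScalars ℝ c).radius :=
    (ofScalars ℝ c).hasFPowerSeriesOnBall ((ENNReal.ofReal_pos.mpr hρ).trans_le hrad)
  have hanalytic : ∀ x ∈ Ioo 0 R, AnalyticAt ℝ g (x ^ α) := fun x hx => by
    refine hball.analyticAt_of_mem ((?_ : _ < _).trans_le hrad)
    rw [edist_dist, Real.dist_eq, sub_zero, abs_of_pos (by have := hx.1; positivity)]
    exact ENNReal.ofReal_lt_ofReal_iff'.mpr ⟨Real.rpow_lt_rpow hx.1.le hx.2 hα0, hρ⟩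
  have hyg : EqOn y (fun s => g (s ^ α)) (Ioo 0 R) := fun x hx => by
    simp [hy, g, ofScalarsSum_eq_tsum, mul_comm _ α, Real.rpow_mul_natCast hx.1.le]
  have hode : ∀ t ∈ Ioo 0 (R ^ α), deriv (deriv g) t - 2 * (t * deriv g t) + 2 * m * g t = 0 := by
    intro t ht
    obtain ⟨x, hx, rfl⟩ := exists_rpow_eq_of_mem_Ioo hα0 hR.le ht
    exact hermite_ode_of_conformable_hermite hα0.ne' hyg hanalytic (fun x hx => heq x hx.1 hx.2) hx
  have hrec := hball.hasFPowerSeriesAt.hermite_coeff_recurrence (m := m)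
    ((eventually_of_mem (Ioo_mem_nhdsGT hρ) hode).frequently.filter_mono
      (nhdsWithin_mono _ fun _ ht => ne_of_gt ht))
  refine ⟨by linear_combination hrec 0 / 2, fun k _ => ?_⟩
  rw [eq_div_iff (by positivity)]
  linear_combination hrec k
end

section
/- Let j ∈ ℕ, α = 1/(2j+1), and let n ≥ 1 be an integer. Writing I_{m,m} = ∫_{−∞}^{∞} (H_m^α(x))² e^{−x^{2α}} |x|^{α−1} dx, one has the recurrence I_{n,n} = 2n · I_{n−1,n−1}. -/
open MeasureTheory

/-- The physicists' Hermite polynomials, as real functions: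
`H₀ = 1`, `H₁ x = 2 x`, `H_{m+1} x = 2 x * H_m x - 2 m * H_{m-1} x`. -/
noncomputable def hermiteP : ℕ → ℝ → ℝ
  | 0, _ => 1
  | 1, x => 2 * x
  | (m + 2), x => 2 * x * hermiteP (m + 1) x - 2 * ((m : ℝ) + 1) * hermiteP m x

/-- The real `α`-th power for `α = 1/(2j+1)`, interpreted via the real odd root:
`sign x * |x| ^ α`. -/
noncomputable def oddRoot (α x : ℝ) : ℝ := Real.sign x * |x| ^ α

/-!
The substitution `u = x ^ α` (through the real odd root) turns `I_m` into
`α⁻¹ * J_m` with `J_m = ∫ H_m(u)² e^{-u²} du`. On the Gaussian side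
`H_{m+1} e^{-u²} = -(H_m e^{-u²})'`, so one integration by parts together with
`H_{m+1}' = 2(m+1) H_m` gives `J_{m+1} = 2(m+1) J_m`.
-/

open Real Set Polynomial

theorem hermiteP_succ (m : ℕ) (x : ℝ) :
    hermiteP (m + 1) x = 2 * x * hermiteP m x - 2 * m * hermiteP (m - 1) x := by
  cases m with
  | zero => simp [hermiteP]
  | succ k =>
    simp only [hermiteP, Nat.add_sub_cancel]
    push_cast
    ring

theorem hasDerivAt_hermiteP : ∀ (m : ℕ) (x : ℝ),
    HasDerivAt (hermiteP m) (2 * m * hermiteP (m - 1) x) x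
  | 0, x => by simpa [hermiteP] using hasDerivAt_const x (1 : ℝ)
  | 1, x => by simpa [hermiteP] using (hasDerivAt_id x).const_mul (2 : ℝ)
  | m + 2, x => by
    have h : HasDerivAt (fun y => 2 * y * hermiteP (m + 1) y - 2 * ((m : ℝ) + 1) * hermiteP m y)
        (2 * 1 * hermiteP (m + 1) x + 2 * x * (2 * (m + 1 : ℕ) * hermiteP m x)
          - 2 * ((m : ℝ) + 1) * (2 * m * hermiteP (m - 1) x)) x :=
      (((hasDerivAt_id x).const_mul 2).mul (hasDerivAt_hermiteP (m + 1) x)).sub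
        ((hasDerivAt_hermiteP m x).const_mul _)
    refine h.congr_deriv ?_
    rw [show m + 2 - 1 = m + 1 from rfl, hermiteP_succ m x]
    push_cast
    ring

theorem exists_eval_eq_hermiteP : ∀ m : ℕ, ∃ p : ℝ[X], ∀ x, p.eval x = hermiteP m x
  | 0 => ⟨1, fun x => by simp [hermiteP]⟩
  | 1 => ⟨C 2 * X, fun x => by simp [hermiteP]⟩
  | m + 2 => by
    obtain ⟨p, hp⟩ := exists_eval_eq_hermiteP (m + 1)
    obtain ⟨q, hq⟩ := exists_eval_eq_hermiteP m
    exact ⟨C 2 * X * p - C (2 * ((m : ℝ) + 1)) * q, fun x => by simp [hermiteP, hp, hq]⟩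

theorem integrable_eval_mul_exp_neg_sq (p : ℝ[X]) :
    Integrable fun x : ℝ => p.eval x * exp (-x ^ 2) := by
  induction p using Polynomial.induction_on' with
  | add p q hp hq => simpa [add_mul] using hp.fun_add hq
  | monomial n a =>
    refine ((integrable_rpow_mul_exp_neg_mul_sq one_pos
      (by linarith [n.cast_nonneg (α := ℝ)] : (-1 : ℝ) < n)).const_mul a).congr ?_
    filter_upwards with x
    simp [rpow_natCast, mul_assoc]

theorem integrable_hermiteP_mul_hermiteP_mul_exp_neg_sq (m k : ℕ) :
    Integrable fun x : ℝ => hermiteP m x * hermiteP k x * exp (-x ^ 2) := by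
  obtain ⟨p, hp⟩ := exists_eval_eq_hermiteP m
  obtain ⟨q, hq⟩ := exists_eval_eq_hermiteP k
  simpa [hp, hq] using integrable_eval_mul_exp_neg_sq (p * q)

theorem hasDerivAt_hermiteP_mul_exp_neg_sq (m : ℕ) (x : ℝ) :
    HasDerivAt (fun y => hermiteP m y * exp (-y ^ 2)) (-(hermiteP (m + 1) x * exp (-x ^ 2))) x := by
  have hexp : HasDerivAt (fun y : ℝ => exp (-y ^ 2)) (exp (-x ^ 2) * -(2 * x)) x := by
    simpa using ((hasDerivAt_pow 2 x).neg).exp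
  refine ((hasDerivAt_hermiteP m x).mul hexp).congr_deriv ?_
  rw [hermiteP_succ]
  ring

theorem integral_hermiteP_succ_sq_mul_exp_neg_sq (m : ℕ) :
    ∫ x : ℝ, hermiteP (m + 1) x ^ 2 * exp (-x ^ 2)
      = 2 * (m + 1) * ∫ x : ℝ, hermiteP m x ^ 2 * exp (-x ^ 2) := by
  have hJ := integrable_hermiteP_mul_hermiteP_mul_exp_neg_sq
  have hparts := integral_mul_deriv_eq_deriv_mul_of_integrable
    (u := hermiteP (m + 1)) (v := fun y => hermiteP m y * exp (-y ^ 2))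
    (fun x _ => by simpa using hasDerivAt_hermiteP (m + 1) x)
    (fun x _ => hasDerivAt_hermiteP_mul_exp_neg_sq m x)
    ((hJ (m + 1) (m + 1)).neg.congr
      (.of_forall fun x => by simp only [Pi.mul_apply, Pi.neg_apply]; ring))
    (((hJ m m).const_mul (2 * (m + 1 : ℕ))).congr
      (.of_forall fun x => by simp only [Pi.mul_apply]; push_cast; ring))
    ((hJ (m + 1) m).congr (.of_forall fun x => by simp only [Pi.mul_apply]; ring))
  simp only [mul_neg, integral_neg, neg_inj] at hparts
  calc ∫ x : ℝ, hermiteP (m + 1) x ^ 2 * exp (-x ^ 2)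
      = ∫ x : ℝ, hermiteP (m + 1) x * (hermiteP (m + 1) x * exp (-x ^ 2)) := by
        simp only [sq, mul_assoc]
    _ = ∫ x : ℝ, 2 * (m + 1) * (hermiteP m x ^ 2 * exp (-x ^ 2)) := by
        rw [hparts]; simp only [sq, mul_assoc]
    _ = _ := integral_const_mul _ _

theorem oddRoot_sq {α : ℝ} (hα : α ≠ 0) (x : ℝ) : oddRoot α x ^ 2 = |x| ^ (2 * α) := by
  rcases eq_or_ne x 0 with rfl | hx
  · simp [oddRoot, zero_rpow hα, zero_rpow (mul_ne_zero two_ne_zero hα)]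
  · have hsign : sign x ^ 2 = 1 := by
      rcases sign_apply_eq_of_ne_zero x hx with h | h <;> simp [h]
    rw [oddRoot, mul_pow, hsign, one_mul, mul_comm, rpow_mul (abs_nonneg x), rpow_two]

theorem integral_eq_integral_Ioi_comp_neg_add_integral_Ioi {E : Type*} [NormedAddCommGroup E]
    [NormedSpace ℝ E] {f : ℝ → E} (hneg : IntegrableOn (fun x => f (-x)) (Ioi 0))
    (hpos : IntegrableOn f (Ioi 0)) :
    ∫ x, f x = (∫ x in Ioi 0, f (-x)) + ∫ x in Ioi 0, f x := by
  have hIic : IntegrableOn f (Iic 0) := by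
    rw [← (Measure.measurePreserving_neg (volume : Measure ℝ)).integrableOn_comp_preimage
      (Homeomorph.neg ℝ).measurableEmbedding]
    simpa [Function.comp_def, integrableOn_Ici_iff_integrableOn_Ioi] using hneg
  rw [← intervalIntegral.integral_Iic_add_Ioi hIic hpos, integral_comp_neg_Ioi 0 f, neg_zero]

theorem integral_Ioi_rpow_mul_comp_rpow {E : Type*} [NormedAddCommGroup E] [NormedSpace ℝ E]
    {α : ℝ} (hα : 0 < α) (g : ℝ → E) :
    ∫ x in Ioi 0, x ^ (α - 1) • g (x ^ α) = α⁻¹ • ∫ u in Ioi 0, g u := by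
  rw [← integral_comp_rpow_Ioi_of_pos hα (g := g), ← integral_smul]
  refine setIntegral_congr_fun measurableSet_Ioi fun x _ => ?_
  rw [smul_smul, inv_mul_cancel_left₀ hα.ne']

theorem integral_comp_oddRoot_mul_abs_rpow {α : ℝ} (hα : 0 < α) {g : ℝ → ℝ}
    (hg : Integrable g) :
    ∫ x, g (oddRoot α x) * |x| ^ (α - 1) = α⁻¹ * ∫ u, g u := by
  have hpos : ∀ x ∈ Ioi (0 : ℝ),
      g (oddRoot α x) * |x| ^ (α - 1) = x ^ (α - 1) • g (x ^ α) :=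
    fun x (hx : 0 < x) => by simp [oddRoot, sign_of_pos hx, abs_of_pos hx, mul_comm]
  have hneg : ∀ x ∈ Ioi (0 : ℝ),
      g (oddRoot α (-x)) * |-x| ^ (α - 1) = x ^ (α - 1) • g (-x ^ α) :=
    fun x (hx : 0 < x) => by
      simp [oddRoot, sign_of_neg (neg_neg_of_pos hx), abs_of_pos hx, mul_comm]
  have hgneg : Integrable fun u => g (-u) := hg.comp_neg
  rw [integral_eq_integral_Ioi_comp_neg_add_integral_Ioi
      (integrableOn_congr_fun hneg measurableSet_Ioi |>.mpr
        ((integrableOn_Ioi_comp_rpow_iff' _ hα.ne').mpr hgneg.integrableOn))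
      (integrableOn_congr_fun hpos measurableSet_Ioi |>.mpr
        ((integrableOn_Ioi_comp_rpow_iff' _ hα.ne').mpr hg.integrableOn)),
    setIntegral_congr_fun measurableSet_Ioi hneg, setIntegral_congr_fun measurableSet_Ioi hpos,
    integral_Ioi_rpow_mul_comp_rpow hα (fun u => g (-u)), integral_Ioi_rpow_mul_comp_rpow hα g,
    integral_eq_integral_Ioi_comp_neg_add_integral_Ioi hgneg.integrableOn hg.integrableOn]
  simp only [smul_eq_mul, mul_add]

theorem integral_hermiteP_comp_oddRoot_sq {α : ℝ} (hα : 0 < α) (m : ℕ) :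
    ∫ x : ℝ, hermiteP m (oddRoot α x) ^ 2 * exp (-(|x| ^ (2 * α))) * |x| ^ (α - 1)
      = α⁻¹ * ∫ u : ℝ, hermiteP m u ^ 2 * exp (-u ^ 2) := by
  simp only [← oddRoot_sq hα.ne']
  refine integral_comp_oddRoot_mul_abs_rpow hα (g := fun u => hermiteP m u ^ 2 * exp (-u ^ 2)) ?_
  simpa only [sq] using integrable_hermiteP_mul_hermiteP_mul_exp_neg_sq m m

theorem stmt_17 (j : ℕ) (α : ℝ) (hα : α = 1 / (2 * (j : ℝ) + 1)) (n : ℕ) (hn : 1 ≤ n)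
    (I : ℕ → ℝ)
    (hI : ∀ m : ℕ, I m = ∫ x : ℝ, (hermiteP m (oddRoot α x)) ^ 2 *
        Real.exp (-(|x| ^ (2 * α))) * |x| ^ (α - 1)) :
    I n = 2 * (n : ℝ) * I (n - 1) := by
  have hα_pos : 0 < α := by rw [hα]; positivity
  obtain ⟨k, rfl⟩ : ∃ k, n = k + 1 := Nat.exists_eq_add_of_le' hn
  rw [hI, hI, integral_hermiteP_comp_oddRoot_sq hα_pos, integral_hermiteP_comp_oddRoot_sq hα_pos,
    Nat.add_sub_cancel, integral_hermiteP_succ_sq_mul_exp_neg_sq]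
  push_cast
  ring
end
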